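/- arXiv:2406.18280 — 2 statements merged into one kernel-verified Lean document; each statement's English description precedes it below -/
import Mathlib

section
/- Let ρ, σ be density matrices on an n-partite Hilbert space with p(z) = (1/2^n) ∑_S (-1)^(|S ∩ supp(z)|) Tr(ρ_S σ_S). Then p(z) = 1/2^n for all z ∈ {0,1}^n if and only if ρ_T σ_T = 0 (the zero operator) for every nonempty T ⊆ [n]. -/
/-!
Up to the factor `2⁻ⁿ`, `p` is the Walsh–Fourier transform of the coefficients `c S = Tr(ρ_S σ_S)`,
and `c ∅ = Tr ρ · Tr σ = 1`. By Fourier inversion, `p` is uniform iff `c S = 0` for all `S ≠ ∅`.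
Reduced states of density matrices are positive semidefinite, and for `A = aᴴa`, `B = bᴴb` one has
`Tr(AB) = Tr((b aᴴ)ᴴ (b aᴴ))`, so `Tr(AB) = 0` forces `b aᴴ = 0` and then `AB = aᴴ (b aᴴ)ᴴ b = 0`.
-/

open Finset ComplexOrder

noncomputable def ptrace {n : ℕ} (d : Fin n → ℕ) (S : Finset (Fin n))
    (ρ : Matrix ((i : Fin n) → Fin (d i)) ((i : Fin n) → Fin (d i)) ℂ) :
    Matrix ((i : {j : Fin n // j ∈ S}) → Fin (d i.1))
           ((i : {j : Fin n // j ∈ S}) → Fin (d i.1)) ℂ :=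
  fun x y => ∑ z : (i : {j : Fin n // j ∉ S}) → Fin (d i.1),
    ρ (fun i => if h : i ∈ S then x ⟨i, h⟩ else z ⟨i, h⟩)
      (fun i => if h : i ∈ S then y ⟨i, h⟩ else z ⟨i, h⟩)

/-- `Tr(ρ_S σ_S)`, the overlap of the reduced states on `S`. -/
noncomputable def overlap {n : ℕ} (d : Fin n → ℕ) (S : Finset (Fin n))
    (ρ σ : Matrix ((i : Fin n) → Fin (d i)) ((i : Fin n) → Fin (d i)) ℂ) : ℂ :=
  (ptrace d S ρ * ptrace d S σ).trace

/-- A density matrix: positive semidefinite with unit trace. -/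
def IsDensity {m : Type*} [Fintype m] [DecidableEq m] (ρ : Matrix m m ℂ) : Prop :=
  ρ.PosSemidef ∧ ρ.trace = 1

open scoped Matrix symmDiff

namespace Finset

variable {α R : Type*} [DecidableEq α]

theorem card_symmDiff_add_two_mul_card_inter (A B : Finset α) :
    #(A ∆ B) + 2 * #(A ∩ B) = #A + #B := by
  have hle : #(A ∩ B) ≤ #(A ∪ B) := card_le_card inter_subset_union
  rw [symmDiff_eq_sup_sdiff_inf, sup_eq_union, inf_eq_inter,
    card_sdiff_of_subset inter_subset_union, ← card_union_add_card_inter]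
  omega

theorem neg_one_pow_card_symmDiff [Monoid R] [HasDistribNeg R] (A B : Finset α) :
    (-1 : R) ^ #(A ∆ B) = (-1) ^ #A * (-1) ^ #B := by
  rw [← pow_add, ← card_symmDiff_add_two_mul_card_inter, pow_add, pow_mul]
  simp

theorem neg_one_pow_card_symmDiff_inter [Monoid R] [HasDistribNeg R] (A B z : Finset α) :
    (-1 : R) ^ #((A ∆ B) ∩ z) = (-1) ^ #(A ∩ z) * (-1) ^ #(B ∩ z) := by
  rw [← neg_one_pow_card_symmDiff]
  exact congrArg (fun s => (-1 : R) ^ #s) (inf_symmDiff_distrib_right A B z)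

variable [Fintype α] [CommRing R]

theorem sum_neg_one_pow_card_inter (S : Finset α) :
    ∑ z : Finset α, (-1 : R) ^ #(S ∩ z) = if S = ∅ then 2 ^ Fintype.card α else 0 := by
  have hprod : ∑ z : Finset α, (-1 : R) ^ #(S ∩ z) = ∏ i, (1 + if i ∈ S then -1 else 1) := by
    rw [prod_one_add, powerset_univ]
    simp [prod_ite_mem, inter_comm]
  rw [hprod]
  split_ifs with hS
  · simp [hS, one_add_one_eq_two]
  · obtain ⟨i, hi⟩ := nonempty_iff_ne_empty.mpr hS
    exact prod_eq_zero (mem_univ i) (by simp [hi])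

theorem sum_neg_one_pow_card_inter_mul_sum (c : Finset α → R) (T : Finset α) :
    ∑ z : Finset α, (-1 : R) ^ #(T ∩ z) * ∑ S : Finset α, (-1 : R) ^ #(S ∩ z) * c S =
      2 ^ Fintype.card α * c T := by
  simp_rw [mul_sum, ← mul_assoc, ← neg_one_pow_card_symmDiff_inter]
  rw [sum_comm]
  simp_rw [← sum_mul, sum_neg_one_pow_card_inter, ← bot_eq_empty, symmDiff_eq_bot, ite_mul,
    zero_mul]
  simp

theorem forall_sum_neg_one_pow_card_inter_mul_eq_iff [NoZeroDivisors R] [NeZero (2 : R)]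
    (c : Finset α → R) (a : R) :
    (∀ z : Finset α, ∑ S : Finset α, (-1 : R) ^ #(S ∩ z) * c S = a) ↔
      c ∅ = a ∧ ∀ S : Finset α, S.Nonempty → c S = 0 := by
  constructor
  · intro h
    have hcoeff (T : Finset α) :
        2 ^ Fintype.card α * c T = 2 ^ Fintype.card α * if T = ∅ then a else 0 := by
      rw [← sum_neg_one_pow_card_inter_mul_sum]
      simp_rw [h, ← sum_mul, sum_neg_one_pow_card_inter, ite_mul, mul_ite, zero_mul, mul_zero]
    have h2 : (2 : R) ^ Fintype.card α ≠ 0 := pow_ne_zero _ two_ne_zero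
    refine ⟨by simpa using mul_left_cancel₀ h2 (hcoeff ∅), fun S hS => ?_⟩
    simpa [hS.ne_empty] using mul_left_cancel₀ h2 (hcoeff S)
  · rintro ⟨hempty, hrest⟩ z
    rw [sum_eq_single ∅ (fun S _ hS => by rw [hrest S (nonempty_iff_ne_empty.mpr hS), mul_zero])
      (by simp)]
    simp [hempty]

end Finset

open scoped MatrixOrder in
theorem Matrix.PosSemidef.mul_eq_zero_of_trace_mul_eq_zero {𝕜 m : Type*} [RCLike 𝕜] [Fintype m]
    [DecidableEq m] {A B : Matrix m m 𝕜} (hA : A.PosSemidef) (hB : B.PosSemidef)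
    (h : (A * B).trace = 0) : A * B = 0 := by
  obtain ⟨a, rfl⟩ := CStarAlgebra.nonneg_iff_eq_star_mul_self.mp hA.nonneg
  obtain ⟨b, rfl⟩ := CStarAlgebra.nonneg_iff_eq_star_mul_self.mp hB.nonneg
  simp only [Matrix.star_eq_conjTranspose] at h ⊢
  have hba : b * aᴴ = 0 := by
    rw [← Matrix.trace_conjTranspose_mul_self_eq_zero_iff, ← h, Matrix.trace_mul_comm (aᴴ * a)]
    simp only [Matrix.conjTranspose_mul, Matrix.conjTranspose_conjTranspose, Matrix.mul_assoc]
    rw [Matrix.trace_mul_comm a]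
    simp only [Matrix.mul_assoc]
  calc aᴴ * a * (bᴴ * b) = aᴴ * (b * aᴴ)ᴴ * b := by
        simp only [Matrix.conjTranspose_mul, Matrix.conjTranspose_conjTranspose, Matrix.mul_assoc]
    _ = 0 := by rw [hba, Matrix.conjTranspose_zero, Matrix.mul_zero, Matrix.zero_mul]

section PartialTrace

variable {n : ℕ} {d : Fin n → ℕ}

theorem Matrix.PosSemidef.ptrace {ρ : Matrix ((i : Fin n) → Fin (d i)) ((i : Fin n) → Fin (d i)) ℂ}
    (hρ : ρ.PosSemidef) (S : Finset (Fin n)) : (ptrace d S ρ).PosSemidef := by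
  let embed (z : (i : {j : Fin n // j ∉ S}) → Fin (d i.1))
      (x : (i : {j : Fin n // j ∈ S}) → Fin (d i.1)) (i : Fin n) : Fin (d i) :=
    if h : i ∈ S then x ⟨i, h⟩ else z ⟨i, h⟩
  have hsum : _root_.ptrace d S ρ = ∑ z, ρ.submatrix (embed z) (embed z) := by
    ext x y
    simp [_root_.ptrace, Matrix.sum_apply, embed]
  rw [hsum]
  exact Matrix.posSemidef_sum _ fun z _ => hρ.submatrix _

theorem ptrace_empty_apply (τ : Matrix ((i : Fin n) → Fin (d i)) ((i : Fin n) → Fin (d i)) ℂ)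
    (x y : (i : {j : Fin n // j ∈ (∅ : Finset (Fin n))}) → Fin (d i.1)) :
    ptrace d ∅ τ x y = τ.trace :=
  Fintype.sum_equiv
    (⟨fun z i => z ⟨i, notMem_empty i⟩, fun w i => w i.1, fun _ => rfl, fun _ => rfl⟩ :
      ((i : {j : Fin n // j ∉ (∅ : Finset (Fin n))}) → Fin (d i.1)) ≃ ((i : Fin n) → Fin (d i)))
    _ _ fun _ => rfl

theorem overlap_empty (ρ σ : Matrix ((i : Fin n) → Fin (d i)) ((i : Fin n) → Fin (d i)) ℂ) :
    overlap d ∅ ρ σ = ρ.trace * σ.trace := by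
  simp [overlap, Matrix.trace, Matrix.mul_apply, ptrace_empty_apply]

theorem overlap_eq_zero_iff {ρ σ : Matrix ((i : Fin n) → Fin (d i)) ((i : Fin n) → Fin (d i)) ℂ}
    (hρ : ρ.PosSemidef) (hσ : σ.PosSemidef) (T : Finset (Fin n)) :
    overlap d T ρ σ = 0 ↔ ptrace d T ρ * ptrace d T σ = 0 :=
  ⟨(hρ.ptrace T).mul_eq_zero_of_trace_mul_eq_zero (hσ.ptrace T),
    fun h => by rw [overlap, h, Matrix.trace_zero]⟩

end PartialTrace

/-- In the `n`-qubit parallelized SWAP test of `ρ` and `σ` (bitstrings `z` identified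
with their supports), `p(z) = 1/2^n` for all `z` if and only if `ρ_T σ_T = 0` for every
nonempty `T ⊆ [n]`. -/
theorem swap_test_uniform_iff_orthogonal {n : ℕ} (d : Fin n → ℕ)
    (ρ σ : Matrix ((i : Fin n) → Fin (d i)) ((i : Fin n) → Fin (d i)) ℂ)
    (hρ : IsDensity ρ) (hσ : IsDensity σ) :
    (∀ z : Finset (Fin n),
        (1 / 2 ^ n : ℂ) * (∑ S : Finset (Fin n), (-1 : ℂ) ^ (S ∩ z).card * overlap d S ρ σ) =
          1 / 2 ^ n) ↔
      (∀ T : Finset (Fin n), T.Nonempty → ptrace d T ρ * ptrace d T σ = 0) := by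
  have hscale : (1 / 2 ^ n : ℂ) ≠ 0 := by simp
  have hempty : overlap d ∅ ρ σ = 1 := by rw [overlap_empty, hρ.2, hσ.2, mul_one]
  simp only [mul_eq_left₀ hscale]
  rw [forall_sum_neg_one_pow_card_inter_mul_eq_iff, hempty]
  simp only [true_and, overlap_eq_zero_iff hρ.1 hσ.1]
end

section
/- Let Q be an ((n,K,δ))_d QECC with normalized projector ρ, and let ρ' be any density matrix on the same space with trace distance D(ρ', ρ) ≤ ε. Then |K·B'_{δ-1}(ρ',ρ') − A'_{δ-1}(ρ',ρ')| ≤ 4(K+1)·C(n, δ−1)·ε, where A'_j(τ,τ) = ∑_{|T|=j} Tr(τ_T²) and B'_j(τ,τ) = ∑_{|T|=j} Tr(τ_{T^c}²) are the Rains unitary enumerators and K·B'_{δ-1}(ρ,ρ) = A'_{δ-1}(ρ,ρ). -/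
open Finset ComplexOrder

/-- The trace norm `‖A‖₁ = Tr √(AᴴA)` of a complex matrix. -/
noncomputable def traceNorm {m : Type*} [Fintype m] [DecidableEq m]
    (A : Matrix m m ℂ) : ℝ :=
  (((Matrix.posSemidef_conjTranspose_mul_self A).isHermitian.eigenvectorUnitary.1 *
      Matrix.diagonal (((↑) : ℝ → ℂ) ∘ (√·) ∘ (Matrix.posSemidef_conjTranspose_mul_self A).isHermitian.eigenvalues) *
      (star (Matrix.posSemidef_conjTranspose_mul_self A).isHermitian.eigenvectorUnitary :
        Matrix m m ℂ)).trace).re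

/-- The trace distance `D(ρ,σ) = ‖ρ − σ‖₁ / 2`. -/
noncomputable def traceDist {m : Type*} [Fintype m] [DecidableEq m]
    (ρ σ : Matrix m m ℂ) : ℝ :=
  traceNorm (ρ - σ) / 2

/-!
Write `A = ρ'_T` and `B = ρ_T`. Then `Tr A² − Tr B² = Tr((A + B)(A − B)) = Tr(((A + B) ⊗ 1)(ρ' − ρ))`,
since `N ↦ N ⊗ 1` is the adjoint of the partial trace. The operator `(A + B) ⊗ 1` lies between
`0` and `Tr(A + B) • 1 = 2`, so splitting `ρ' − ρ` into its positive and negative parts bounds the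
right-hand side by `2‖ρ' − ρ‖₁ = 4 D(ρ', ρ)`. Each of the `C(n, δ − 1)` purities in the two
enumerators therefore moves by at most `4ε`, while the enumerators of `ρ` balance exactly.
-/

open Matrix
open scoped MatrixOrder Kronecker

namespace Matrix

variable {m : Type*} [Fintype m] [DecidableEq m]

section RCLike

variable {𝕜 : Type*} [RCLike 𝕜] {A B : Matrix m m 𝕜}

theorem PosSemidef.trace_mul_nonneg (hA : A.PosSemidef) (hB : B.PosSemidef) :
    0 ≤ (A * B).trace := by
  obtain ⟨X, rfl⟩ := CStarAlgebra.nonneg_iff_eq_star_mul_self.mp hB.nonneg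
  rw [← mul_assoc, trace_mul_cycle]
  exact (hA.mul_mul_conjTranspose_same X).trace_nonneg

theorem PosSemidef.le_algebraMap_re_trace (hA : A.PosSemidef) :
    A ≤ algebraMap ℝ (Matrix m m 𝕜) (RCLike.re A.trace) := by
  refine le_algebraMap_of_spectrum_le (fun x hx => ?_) hA.isHermitian.isSelfAdjoint
  obtain ⟨i, rfl⟩ := hA.isHermitian.spectrum_real_eq_range_eigenvalues ▸ hx
  rw [hA.isHermitian.trace_eq_sum_eigenvalues, ← RCLike.ofReal_sum, RCLike.ofReal_re]
  exact single_le_sum (fun j _ => hA.eigenvalues_nonneg j) (mem_univ i)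

theorem re_trace_mul_le_of_le_algebraMap {c : ℝ} (hA : A ≤ algebraMap ℝ (Matrix m m 𝕜) c)
    (hB : B.PosSemidef) : RCLike.re (A * B).trace ≤ c * RCLike.re B.trace := by
  have h := RCLike.nonneg_iff.mp (PosSemidef.trace_mul_nonneg hA hB)
  simpa [sub_mul, Algebra.algebraMap_eq_smul_one, RCLike.smul_re] using h.1

end RCLike

theorem traceNorm_eq_re_trace_abs (A : Matrix m m ℂ) : traceNorm A = (CFC.abs A).trace.re := by
  have hA := posSemidef_conjTranspose_mul_self A
  rw [CFC.abs, star_eq_conjTranspose, CFC.sqrt_eq_real_sqrt _ hA.nonneg, cfcₙ_eq_cfc,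
    hA.isHermitian.cfc_eq, IsHermitian.cfc, Unitary.conjStarAlgAut_apply]
  rfl

theorem abs_re_trace_mul_le_traceNorm {M D : Matrix m m ℂ} {c : ℝ} (hM : 0 ≤ M)
    (hMc : M ≤ algebraMap ℝ (Matrix m m ℂ) c) (hD : D.IsHermitian) :
    |(M * D).trace.re| ≤ c * traceNorm D := by
  have bounds (R : Matrix m m ℂ) (hR : R.PosSemidef) :
      0 ≤ (M * R).trace.re ∧ (M * R).trace.re ≤ c * R.trace.re :=
    ⟨(Complex.nonneg_iff.mp (hM.posSemidef.trace_mul_nonneg hR)).1,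
      re_trace_mul_le_of_le_algebraMap hMc hR⟩
  obtain ⟨hP₀, hP⟩ := bounds D⁺ (CFC.posPart_nonneg D).posSemidef
  obtain ⟨hQ₀, hQ⟩ := bounds D⁻ (CFC.negPart_nonneg D).posSemidef
  have hsplit : (M * D).trace.re = (M * D⁺).trace.re - (M * D⁻).trace.re := by
    conv_lhs => rw [← CFC.posPart_sub_negPart D hD]
    rw [mul_sub, trace_sub, Complex.sub_re]
  rw [traceNorm_eq_re_trace_abs, ← CFC.posPart_add_negPart D hD, trace_add, Complex.add_re,
    mul_add, hsplit, abs_sub_le_iff]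
  constructor <;> linarith

end Matrix

section PartialTrace

variable {n : ℕ} (d : Fin n → ℕ) (S : Finset (Fin n))

abbrev Config : Type := (i : Fin n) → Fin (d i)

abbrev ConfigOn : Type := (i : {j : Fin n // j ∈ S}) → Fin (d i.1)

abbrev ConfigOff : Type := (i : {j : Fin n // j ∉ S}) → Fin (d i.1)

abbrev splitSites : Config d ≃ ConfigOn d S × ConfigOff d S :=
  Equiv.piEquivPiSubtypeProd (· ∈ S) (fun i => Fin (d i))

theorem ptrace_eq_sum_submatrix (X : Matrix (Config d) (Config d) ℂ) :
    ptrace d S X = ∑ z, X.submatrix (fun x => (splitSites d S).symm (x, z))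
      (fun x => (splitSites d S).symm (x, z)) := by
  ext x y
  rw [Matrix.sum_apply]
  rfl

theorem ptrace_posSemidef {X : Matrix (Config d) (Config d) ℂ} (hX : X.PosSemidef) :
    (ptrace d S X).PosSemidef := by
  rw [ptrace_eq_sum_submatrix]
  exact posSemidef_sum _ fun z _ => hX.submatrix _

theorem ptrace_sub (X Y : Matrix (Config d) (Config d) ℂ) :
    ptrace d S (X - Y) = ptrace d S X - ptrace d S Y := by
  ext x y
  simp [ptrace, sum_sub_distrib]

noncomputable def tensorOne (N : Matrix (ConfigOn d S) (ConfigOn d S) ℂ) :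
    Matrix (Config d) (Config d) ℂ :=
  (N ⊗ₖ (1 : Matrix (ConfigOff d S) (ConfigOff d S) ℂ)).submatrix (splitSites d S)
    (splitSites d S)

variable {d S}

theorem tensorOne_posSemidef {N : Matrix (ConfigOn d S) (ConfigOn d S) ℂ} (hN : N.PosSemidef) :
    (tensorOne d S N).PosSemidef :=
  (hN.kronecker PosSemidef.one).submatrix _

theorem tensorOne_algebraMap (c : ℝ) :
    tensorOne d S (algebraMap ℝ _ c) = algebraMap ℝ _ c := by
  simp [tensorOne, Algebra.algebraMap_eq_smul_one, smul_kronecker, submatrix_smul,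
    submatrix_one_equiv]

theorem tensorOne_one : tensorOne d S 1 = 1 := by
  simpa using tensorOne_algebraMap (d := d) (S := S) 1

theorem tensorOne_sub (N N' : Matrix (ConfigOn d S) (ConfigOn d S) ℂ) :
    tensorOne d S (N - N') = tensorOne d S N - tensorOne d S N' := by
  ext a b
  simp [tensorOne, sub_mul]

theorem tensorOne_mono : Monotone (tensorOne d S) := fun N N' h => by
  rw [le_iff, ← tensorOne_sub]
  exact tensorOne_posSemidef h

theorem trace_tensorOne_mul (N : Matrix (ConfigOn d S) (ConfigOn d S) ℂ)
    (X : Matrix (Config d) (Config d) ℂ) :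
    (tensorOne d S N * X).trace = (N * ptrace d S X).trace := by
  simp only [trace, Matrix.diag, mul_apply, tensorOne, submatrix_apply]
  rw [← (splitSites d S).symm.sum_comp]
  conv_lhs => enter [2, p]; rw [← (splitSites d S).symm.sum_comp]
  simp only [Equiv.apply_symm_apply, Fintype.sum_prod_type, kroneckerMap_apply, one_apply,
    mul_ite, mul_one, mul_zero, ite_mul, zero_mul, sum_ite_eq, mem_univ, if_true, ptrace, mul_sum]
  exact sum_congr rfl fun x _ => sum_comm

theorem trace_ptrace (X : Matrix (Config d) (Config d) ℂ) : (ptrace d S X).trace = X.trace := by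
  simpa [tensorOne_one] using (trace_tensorOne_mul 1 X).symm

end PartialTrace

section Overlap

variable {n : ℕ} (d : Fin n → ℕ) (S : Finset (Fin n))

theorem overlap_self_sub_overlap_self (ρ σ : Matrix (Config d) (Config d) ℂ) :
    overlap d S ρ ρ - overlap d S σ σ =
      (tensorOne d S (ptrace d S ρ + ptrace d S σ) * (ρ - σ)).trace := by
  rw [trace_tensorOne_mul, ptrace_sub, overlap, overlap, add_mul, mul_sub, mul_sub, trace_add,
    trace_sub, trace_sub, trace_mul_comm (ptrace d S σ) (ptrace d S ρ)]
  ring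

theorem abs_re_overlap_self_sub_le {ρ σ : Matrix (Config d) (Config d) ℂ}
    (hρ : IsDensity ρ) (hσ : IsDensity σ) :
    |(overlap d S ρ ρ).re - (overlap d S σ σ).re| ≤ 4 * traceDist ρ σ := by
  have hM := (ptrace_posSemidef d S hρ.1).add (ptrace_posSemidef d S hσ.1)
  have hM_le : ptrace d S ρ + ptrace d S σ ≤ algebraMap ℝ _ 2 := by
    have h := hM.le_algebraMap_re_trace
    rw [trace_add, trace_ptrace, trace_ptrace, hρ.2, hσ.2] at h
    norm_num at h
    exact h
  have h := abs_re_trace_mul_le_traceNorm (tensorOne_posSemidef hM).nonneg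
    (tensorOne_algebraMap 2 ▸ tensorOne_mono hM_le) (hρ.1.1.sub hσ.1.1)
  rw [← Complex.sub_re, overlap_self_sub_overlap_self, traceDist]
  linarith

end Overlap

theorem abs_mul_sum_sub_sum_le {ι : Type*} (s : Finset ι) {K η : ℝ} (hK : 0 ≤ K)
    {f g f₀ g₀ : ι → ℝ} (h₀ : K * ∑ i ∈ s, f₀ i = ∑ i ∈ s, g₀ i)
    (hf : ∀ i ∈ s, |f i - f₀ i| ≤ η) (hg : ∀ i ∈ s, |g i - g₀ i| ≤ η) :
    |K * ∑ i ∈ s, f i - ∑ i ∈ s, g i| ≤ (K + 1) * (s.card * η) := by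
  have sum_close {u v : ι → ℝ} (h : ∀ i ∈ s, |u i - v i| ≤ η) :
      |∑ i ∈ s, u i - ∑ i ∈ s, v i| ≤ s.card * η := by
    rw [← sum_sub_distrib]
    exact (abs_sum_le_sum_abs _ _).trans (by simpa using sum_le_sum h)
  have hKf := mul_le_mul_of_nonneg_left (sum_close hf) hK
  have hg' := sum_close hg
  calc |K * ∑ i ∈ s, f i - ∑ i ∈ s, g i|
      = |K * (∑ i ∈ s, f i - ∑ i ∈ s, f₀ i) - (∑ i ∈ s, g i - ∑ i ∈ s, g₀ i)| := by
        rw [← h₀]; ring_nf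
    _ ≤ K * |∑ i ∈ s, f i - ∑ i ∈ s, f₀ i| + |∑ i ∈ s, g i - ∑ i ∈ s, g₀ i| := by
        refine (abs_sub _ _).trans ?_
        rw [abs_mul, abs_of_nonneg hK]
    _ ≤ (K + 1) * (s.card * η) := by linarith

theorem card_filter_card_eq_choose (n k : ℕ) :
    (univ.filter (fun T : Finset (Fin n) => T.card = k)).card = n.choose k := by
  rw [← powerset_univ, ← powersetCard_eq_filter, card_powersetCard, card_univ, Fintype.card_fin]

theorem qecc_distance_robustness_general {n : ℕ} (d : Fin n → ℕ) (K δcode : ℕ) (ε : ℝ)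
    (ρ ρ' : Matrix ((i : Fin n) → Fin (d i)) ((i : Fin n) → Fin (d i)) ℂ)
    (hρ : IsDensity ρ) (hρ' : IsDensity ρ')
    (hQECC : (K : ℂ) *
          (∑ T ∈ Finset.univ.filter (fun T : Finset (Fin n) => T.card = δcode - 1),
            overlap d Tᶜ ρ ρ) =
        ∑ T ∈ Finset.univ.filter (fun T : Finset (Fin n) => T.card = δcode - 1),
          overlap d T ρ ρ)
    (hdist : traceDist ρ' ρ ≤ ε) :
    |(K : ℝ) *
          (∑ T ∈ Finset.univ.filter (fun T : Finset (Fin n) => T.card = δcode - 1),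
            overlap d Tᶜ ρ' ρ').re -
        (∑ T ∈ Finset.univ.filter (fun T : Finset (Fin n) => T.card = δcode - 1),
          overlap d T ρ' ρ').re| ≤
      4 * (K + 1) * (n.choose (δcode - 1)) * ε := by
  have hQECC_re := congrArg Complex.re hQECC
  simp only [Complex.re_sum, Complex.mul_re, Complex.natCast_re, Complex.natCast_im, zero_mul,
    sub_zero] at hQECC_re ⊢
  have hclose (T : Finset (Fin n)) :
      |(overlap d T ρ' ρ').re - (overlap d T ρ ρ).re| ≤ 4 * ε :=
    (abs_re_overlap_self_sub_le d T hρ' hρ).trans (by linarith)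
  have h := abs_mul_sum_sub_sum_le _ K.cast_nonneg hQECC_re (fun T _ => hclose Tᶜ)
    (fun T _ => hclose T)
  rw [card_filter_card_eq_choose] at h
  linarith

/-- Robustness of the distance criterion: let `ρ` be the normalized projector of an
`((n,K,δ))_d` QECC `Q` (so `K•ρ` is a projector and, by the Rains characterization of the
distance, `K·B'_{δ-1}(ρ,ρ) = A'_{δ-1}(ρ,ρ)`, where
`A'_j(τ,τ) = ∑_{|T|=j} Tr(τ_T²)` and `B'_j(τ,τ) = ∑_{|T|=j} Tr(τ_{Tᶜ}²)`).
If `ρ'` is any density matrix with trace distance `D(ρ',ρ) ≤ ε`, then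
`|K·B'_{δ-1}(ρ',ρ') − A'_{δ-1}(ρ',ρ')| ≤ 4(K+1)·C(n,δ−1)·ε`. -/
theorem qecc_distance_robustness {n : ℕ} (d : Fin n → ℕ) (K δcode : ℕ) (ε : ℝ)
    (ρ ρ' : Matrix ((i : Fin n) → Fin (d i)) ((i : Fin n) → Fin (d i)) ℂ)
    (hρ : IsDensity ρ) (hρ' : IsDensity ρ')
    (hproj : ((K : ℂ) • ρ) * ((K : ℂ) • ρ) = (K : ℂ) • ρ)
    (hQECC : (K : ℂ) *
          (∑ T ∈ Finset.univ.filter (fun T : Finset (Fin n) => T.card = δcode - 1),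
            overlap d Tᶜ ρ ρ) =
        ∑ T ∈ Finset.univ.filter (fun T : Finset (Fin n) => T.card = δcode - 1),
          overlap d T ρ ρ)
    (hdist : traceDist ρ' ρ ≤ ε) :
    |(K : ℝ) *
          (∑ T ∈ Finset.univ.filter (fun T : Finset (Fin n) => T.card = δcode - 1),
            overlap d Tᶜ ρ' ρ').re -
        (∑ T ∈ Finset.univ.filter (fun T : Finset (Fin n) => T.card = δcode - 1),
          overlap d T ρ' ρ').re| ≤
      4 * (K + 1) * (n.choose (δcode - 1)) * ε :=
  qecc_distance_robustness_general d K δcode ε ρ ρ' hρ hρ' hQECC hdist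
end
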